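/- arXiv:1603.01058 — 4 statements merged into one kernel-verified Lean document; each statement's English description precedes it below -/
import Mathlib

section
/- Every finite word w over any alphabet has at most |w|+1 distinct palindromic factors (counting the empty word as a palindromic factor). -/
/-!
Prepending a letter `a` to a word `t` creates at most one new palindromic factor: every new one
is a prefix of `a :: t`, and if `p` is shorter than `q`, both palindromic prefixes, then `p` is a
proper suffix of `q` and hence already a factor of `t`. Induction on the word gives the bound.
-/

/-- A word is a palindrome if it equals its reversal. -/
def Palindromic {α : Type*} (w : List α) : Prop := w.reverse = w

/-- A finite word is rich if it has exactly |w|+1 distinct palindromic factors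
(including the empty word). -/
def Rich {α : Type*} (w : List α) : Prop :=
  {p : List α | p <:+: w ∧ Palindromic p}.ncard = w.length + 1

/-- A word is square-free if it has no factor of the form `u ++ u` with `u` nonempty. -/
def SqFree {α : Type*} (w : List α) : Prop :=
  ∀ u : List α, u ≠ [] → ¬ (u ++ u) <:+: w

theorem Palindromic.suffix_of_prefix {α : Type*} {p q : List α} (hp : Palindromic p)
    (hq : Palindromic q) (h : p <+: q) : p <:+ q := by
  rwa [← List.reverse_prefix, hp, hq]

namespace List

variable {α : Type*}

def palindromicFactors (w : List α) : Set (List α) := {p | p <:+: w ∧ Palindromic p}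

theorem palindromicFactors_finite (w : List α) : (palindromicFactors w).Finite := by
  classical
  exact w.sublists.toFinset.finite_toSet.subset fun p hp => by
    simpa using hp.1.sublist

theorem palindromicFactors_nil : palindromicFactors ([] : List α) = {[]} := by
  ext p
  simp only [palindromicFactors, Set.mem_ofPred_eq, Set.mem_singleton_iff, infix_nil]
  exact ⟨And.left, fun h => ⟨h, h ▸ rfl⟩⟩

theorem infix_of_suffix_of_prefix_cons {p q t : List α} {a : α} (hpq : p <:+ q)
    (hq : q <+: a :: t) (hlen : p.length < q.length) : p <:+: t := by
  obtain ⟨u, rfl⟩ := hpq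
  obtain ⟨v, hv⟩ := hq
  cases u with
  | nil => simp at hlen
  | cons b u =>
    simp only [cons_append, cons.injEq] at hv
    exact ⟨u, v, hv.2⟩

theorem prefix_of_mem_palindromicFactors_cons_sdiff {a : α} {t p : List α}
    (hp : p ∈ palindromicFactors (a :: t) \ palindromicFactors t) : p <+: a :: t := by
  obtain ⟨⟨hinf, hpal⟩, hnew⟩ := hp
  exact (infix_cons_iff.mp hinf).resolve_right fun h => hnew ⟨h, hpal⟩

theorem subsingleton_palindromicFactors_cons_sdiff (a : α) (t : List α) :
    (palindromicFactors (a :: t) \ palindromicFactors t).Subsingleton := by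
  intro p hp q hq
  wlog hlen : p.length ≤ q.length generalizing p q
  · exact (this hq hp (le_of_not_ge hlen)).symm
  have hp_pre := prefix_of_mem_palindromicFactors_cons_sdiff hp
  have hq_pre := prefix_of_mem_palindromicFactors_cons_sdiff hq
  have hpq : p <+: q := prefix_of_prefix_length_le hp_pre hq_pre hlen
  refine hpq.eq_of_length (hlen.eq_of_not_lt fun hlt => hp.2 ⟨?_, hp.1.2⟩)
  exact infix_of_suffix_of_prefix_cons (Palindromic.suffix_of_prefix hp.1.2 hq.1.2 hpq) hq_pre hlt

theorem ncard_palindromicFactors_cons_le (a : α) (t : List α) :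
    (palindromicFactors (a :: t)).ncard ≤ (palindromicFactors t).ncard + 1 := by
  have hnew : (palindromicFactors (a :: t) \ palindromicFactors t).ncard ≤ 1 :=
    (Set.ncard_le_one_iff ((palindromicFactors_finite _).sdiff)).mpr fun hp hq =>
      subsingleton_palindromicFactors_cons_sdiff a t hp hq
  have hsplit := Set.ncard_le_ncard_sdiff_add_ncard (palindromicFactors (a :: t)) _
    (palindromicFactors_finite t)
  omega

end List

theorem word_has_at_most_len_succ_palindromic_factors {α : Type*} (w : List α) :
    {p : List α | p <:+: w ∧ Palindromic p}.ncard ≤ w.length + 1 := by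
  change w.palindromicFactors.ncard ≤ w.length + 1
  induction w with
  | nil => simp [List.palindromicFactors_nil]
  | cons a t ih =>
    calc (a :: t).palindromicFactors.ncard ≤ t.palindromicFactors.ncard + 1 :=
          List.ncard_palindromicFactors_cons_le a t
      _ ≤ (a :: t).length + 1 := by simpa using ih
end

section
/- Let w be a rich square-free word that is a palindrome, so w = z·b·reverse(z) for some letter b and word z. Then the middle letter b does not occur in z (i.e., b is unioccurrent in w). -/
/-!
Richness forces every prefix `v a` of `w` to end in a palindrome that is not a factor of `v`,
since appending a letter creates at most one new palindromic factor. But `z b` has no palindromic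
suffix `s b` with `s` nonempty: writing `z = P s`, the palindrome gives `b sᴿ = s b`, so
`w = P s (b sᴿ) Pᴿ = P s s b Pᴿ` contains the square `s s`. Hence the new palindrome of the
prefix `z b` is `b` itself, and `b ∉ z`.
-/

section

variable {α : Type*}

def palFactors (w : List α) : Set (List α) := {p | p <:+: w ∧ Palindromic p}

lemma palFactors_finite (w : List α) : (palFactors w).Finite := by
  classical
  refine (w.sublists.toFinset : Finset (List α)).finite_toSet.subset ?_
  rintro p ⟨hp, -⟩
  simpa using hp.sublist

lemma palFactors_nil : palFactors ([] : List α) = {[]} := by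
  ext p
  simp only [palFactors, Set.mem_ofPred_eq, List.infix_nil, Set.mem_singleton_iff,
    and_iff_left_iff_imp]
  rintro rfl
  rfl

lemma Palindromic.isPrefix_of_isSuffix {s t : List α} (hs : Palindromic s) (ht : Palindromic t)
    (h : s <:+ t) : s <+: t := by
  rw [← hs, ← ht]
  exact List.reverse_prefix.mpr h

lemma infix_of_prefix_of_suffix_concat {p s v : List α} {a : α} (hp : p <+: s)
    (hlt : p.length < s.length) (hs : s <:+ v ++ [a]) : p <:+: v := by
  rcases List.suffix_concat_iff.mp hs with rfl | ⟨t, rfl, ht⟩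
  · simp at hlt
  rcases List.prefix_concat_iff.mp hp with rfl | hpt
  · simp at hlt
  · exact hpt.isInfix.trans ht.isInfix

def newPalSuffixes (v : List α) (a : α) : Set (List α) :=
  {s | s <:+ v ++ [a] ∧ Palindromic s ∧ ¬ s <:+: v}

lemma newPalSuffixes_subsingleton (v : List α) (a : α) : (newPalSuffixes v a).Subsingleton := by
  -- the shorter of two palindromic suffixes is a proper prefix of the longer one
  have shorter_not_new : ∀ s₁ s₂, s₁ ∈ newPalSuffixes v a → s₂ ∈ newPalSuffixes v a →
      s₁.length < s₂.length → False := by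
    rintro s₁ s₂ ⟨hs₁, hpal₁, hnew₁⟩ ⟨hs₂, hpal₂, -⟩ hlt
    have hsuf : s₁ <:+ s₂ := List.suffix_of_suffix_length_le hs₁ hs₂ hlt.le
    exact hnew₁ (infix_of_prefix_of_suffix_concat (hpal₁.isPrefix_of_isSuffix hpal₂ hsuf) hlt hs₂)
  intro s₁ h₁ s₂ h₂
  rcases lt_trichotomy s₁.length s₂.length with hlt | heq | hgt
  · exact (shorter_not_new s₁ s₂ h₁ h₂ hlt).elim
  · exact (List.suffix_of_suffix_length_le h₁.1 h₂.1 heq.le).eq_of_length heq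
  · exact (shorter_not_new s₂ s₁ h₂ h₁ hgt).elim

lemma palFactors_concat_subset (v : List α) (a : α) :
    palFactors (v ++ [a]) ⊆ palFactors v ∪ newPalSuffixes v a := by
  rintro p ⟨hp, hpal⟩
  by_cases hv : p <:+: v
  · exact Or.inl ⟨hv, hpal⟩
  · exact Or.inr ⟨(List.infix_concat_iff.mp hp).resolve_right hv, hpal, hv⟩

lemma ncard_palFactors_concat_le (v : List α) (a : α) :
    (palFactors (v ++ [a])).ncard ≤ (palFactors v).ncard + 1 :=
  calc (palFactors (v ++ [a])).ncard
      ≤ (palFactors v ∪ newPalSuffixes v a).ncard :=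
        Set.ncard_le_ncard (palFactors_concat_subset v a)
          ((palFactors_finite v).union ((palFactors_finite (v ++ [a])).subset
            fun _ hs ↦ ⟨hs.1.isInfix, hs.2.1⟩))
    _ ≤ (palFactors v).ncard + (newPalSuffixes v a).ncard := Set.ncard_union_le _ _
    _ ≤ (palFactors v).ncard + 1 := by
        gcongr
        have hsub := newPalSuffixes_subsingleton v a
        exact (Set.ncard_le_one_iff hsub.finite).mpr fun hs ht ↦ hsub hs ht

lemma ncard_palFactors_append_le (v t : List α) :
    (palFactors (v ++ t)).ncard ≤ (palFactors v).ncard + t.length := by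
  induction t using List.reverseRecOn with
  | nil => simp
  | append_singleton t a ih =>
    rw [← List.append_assoc, List.length_append, List.length_singleton]
    have := ncard_palFactors_concat_le (v ++ t) a
    omega

lemma Rich.exists_palindromic_suffix_not_infix {v t : List α} {a : α}
    (hrich : Rich (v ++ [a] ++ t)) : ∃ s, s <:+ v ++ [a] ∧ Palindromic s ∧ ¬ s <:+: v := by
  by_contra! hold
  have hsub : palFactors (v ++ [a]) ⊆ palFactors v := fun p hp ↦
    (palFactors_concat_subset v a hp).elim id fun hnew ↦ (hnew.2.2 (hold p hnew.1 hnew.2.1)).elim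
  have hv := ncard_palFactors_append_le [] v
  have hva := Set.ncard_le_ncard hsub (palFactors_finite v)
  have hw := ncard_palFactors_append_le (v ++ [a]) t
  rw [List.nil_append, palFactors_nil, Set.ncard_singleton] at hv
  change (palFactors _).ncard = _ at hrich
  simp only [List.length_append, List.length_singleton] at hrich
  omega

lemma square_infix_of_palindromic_suffix {z s : List α} {b : α} (hsuf : s ++ [b] <:+ z ++ [b])
    (hpal : Palindromic (s ++ [b])) : s ++ s <:+: z ++ [b] ++ z.reverse := by
  obtain ⟨P, hP⟩ := hsuf
  obtain rfl : z = P ++ s := (List.append_cancel_right (by simpa using hP)).symm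
  have hmirror : [b] ++ s.reverse = s ++ [b] := by simpa [Palindromic] using hpal
  refine ⟨P, [b] ++ P.reverse, ?_⟩
  simp only [List.reverse_append, List.append_assoc]
  rw [← List.append_assoc [b], hmirror, List.append_assoc]

end

theorem middle_letter_unioccurrent {α : Type*} (w z : List α) (b : α)
    (hrich : Rich w) (hsf : SqFree w) (hw : w = z ++ [b] ++ z.reverse) :
    b ∉ z := by
  intro hbz
  subst hw
  obtain ⟨s, hsuf, hpal, hnew⟩ := hrich.exists_palindromic_suffix_not_infix
  rcases List.suffix_concat_iff.mp hsuf with rfl | ⟨t, rfl, -⟩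
  · exact hnew List.nil_infix
  by_cases ht : t = []
  · subst ht
    exact hnew ((List.singleton_infix_iff b z).mpr hbz)
  · exact hsf t ht (square_infix_of_palindromic_suffix hsuf hpal)
end

section
/- Every factor of a rich finite word is rich. -/
namespace RichAux

variable {α : Type*}

/-- The set of palindromic factors. -/
def PF (w : List α) : Set (List α) := {p | p <:+: w ∧ Palindromic p}

lemma pf_finite (w : List α) : (PF w).Finite := by
  classical
  apply Set.Finite.subset (w.sublists.toFinset.finite_toSet)
  intro p hp
  simp only [List.coe_toFinset, Set.mem_setOf_eq, List.mem_sublists]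
  exact hp.1.sublist

lemma pf_nil : PF ([] : List α) = {([] : List α)} := by
  ext p
  simp only [PF, Set.mem_setOf_eq, List.infix_nil, Set.mem_singleton_iff]
  constructor
  · rintro ⟨h, -⟩; exact h
  · rintro rfl; exact ⟨rfl, rfl⟩

lemma pf_mono {u w : List α} (h : u <:+: w) : PF u ⊆ PF w := by
  rintro p ⟨hp, hpal⟩
  exact ⟨hp.trans h, hpal⟩

/-- A palindromic factor of `w ++ [a]` that is not a factor of `w` is a suffix. -/
lemma new_is_suffix {w : List α} {a : α} {p : List α}
    (h : p <:+: w ++ [a]) (hn : ¬ p <:+: w) : p <:+ w ++ [a] := by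
  obtain ⟨x, y, hxy⟩ := h
  cases y using List.reverseRecOn with
  | nil => exact ⟨x, by simpa using hxy⟩
  | append_singleton y' b =>
    exfalso
    apply hn
    have h2 : (x ++ p ++ y') ++ [b] = w ++ [a] := by
      rw [← hxy]; simp [List.append_assoc]
    have h3 := (List.append_inj' h2 rfl).1
    exact ⟨x, y', h3⟩

/-- A proper prefix of a suffix of `w ++ [a]` is a factor of `w`. -/
lemma prefix_infix {w s p : List α} {a : α} (hs : s <:+ w ++ [a])
    (hp : p <+: s) (hlt : p.length < s.length) : p <:+: w := by
  obtain ⟨x, hx⟩ := hs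
  obtain ⟨r, hr⟩ := hp
  have hrne : r ≠ [] := by
    intro h; subst h; simp at hr; subst hr; omega
  cases r using List.reverseRecOn with
  | nil => exact absurd rfl hrne
  | append_singleton r' b =>
    have h2 : (x ++ p ++ r') ++ [b] = w ++ [a] := by
      rw [← hx, ← hr]; simp [List.append_assoc]
    have h3 := (List.append_inj' h2 rfl).1
    exact ⟨x, r', h3⟩

/-- All palindromic factors of `w ++ [a]` are factors of `w`, except possibly one. -/
lemma step (w : List α) (a : α) : ∃ s : List α, PF (w ++ [a]) ⊆ PF w ∪ {s} := by
  classical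
  by_cases hne : ∃ p, p ∈ PF (w ++ [a]) ∧ ¬ p <:+: w
  case neg =>
    push_neg at hne
    exact ⟨[], fun p hp => Or.inl ⟨hne p hp, hp.2⟩⟩
  · obtain ⟨p₀, hp₀, hp₀n⟩ := hne
    set T : Finset (List α) :=
      (pf_finite (w ++ [a])).toFinset.filter (fun p => ¬ p <:+: w) with hT
    have hp₀T : p₀ ∈ T := by
      simp only [hT, Finset.mem_filter, Set.Finite.mem_toFinset]
      exact ⟨hp₀, hp₀n⟩
    obtain ⟨s, hsT, hsmax⟩ := T.exists_max_image (fun p => p.length) ⟨p₀, hp₀T⟩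
    have hsT' : s ∈ PF (w ++ [a]) ∧ ¬ s <:+: w := by
      simpa only [hT, Finset.mem_filter, Set.Finite.mem_toFinset] using hsT
    have hss : s <:+ w ++ [a] := new_is_suffix hsT'.1.1 hsT'.2
    refine ⟨s, ?_⟩
    intro p hp
    by_cases hpw : p <:+: w
    · exact Or.inl ⟨hpw, hp.2⟩
    · right
      have hpT : p ∈ T := by
        simp only [hT, Finset.mem_filter, Set.Finite.mem_toFinset]
        exact ⟨hp, hpw⟩
      have hle : p.length ≤ s.length := hsmax p hpT
      have hps : p <:+ w ++ [a] := new_is_suffix hp.1 hpw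
      rcases List.suffix_or_suffix_of_suffix hps hss with h | h
      · rcases eq_or_lt_of_le hle with heq | hlt
        · exact h.eq_of_length heq
        · -- p is a proper suffix of the palindrome s, hence a proper prefix of s
          exfalso
          apply hpw
          have hpref : p <+: s := by
            have := List.reverse_prefix.mpr h
            rwa [hp.2, hsT'.1.2] at this
          exact prefix_infix hss hpref hlt
      · exact (h.eq_of_length (le_antisymm h.length_le hle)).symm

lemma ncard_step (w : List α) (a : α) :
    (PF (w ++ [a])).ncard ≤ (PF w).ncard + 1 := by
  obtain ⟨s, hs⟩ := step w a
  calc (PF (w ++ [a])).ncard ≤ (PF w ∪ {s}).ncard :=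
        Set.ncard_le_ncard hs ((pf_finite w).union (Set.finite_singleton s))
    _ ≤ (PF w).ncard + ({s} : Set (List α)).ncard := Set.ncard_union_le _ _
    _ = (PF w).ncard + 1 := by rw [Set.ncard_singleton]

lemma pf_card_le (w : List α) : (PF w).ncard ≤ w.length + 1 := by
  induction w using List.reverseRecOn with
  | nil => rw [pf_nil, Set.ncard_singleton]; simp
  | append_singleton v a ih =>
    calc (PF (v ++ [a])).ncard ≤ (PF v).ncard + 1 := ncard_step v a
      _ ≤ v.length + 1 + 1 := by omega
      _ = (v ++ [a]).length + 1 := by simp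

lemma rich_iff (w : List α) : Rich w ↔ (PF w).ncard = w.length + 1 := Iff.rfl

/-- Every prefix of a rich word is rich. -/
lemma rich_prefix : ∀ w : List α, Rich w → ∀ u, u <+: w → Rich u := by
  intro w
  induction w using List.reverseRecOn with
  | nil =>
    intro _ u hu
    rw [List.prefix_nil] at hu
    subst hu
    rw [rich_iff, pf_nil, Set.ncard_singleton]; simp
  | append_singleton v a ih =>
    intro hr u hu
    have hrv : Rich v := by
      rw [rich_iff] at hr ⊢
      have h1 := ncard_step v a
      have h2 := pf_card_le v
      simp only [List.length_append, List.length_singleton] at hr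
      omega
    rcases le_or_gt u.length v.length with hlen | hlen
    · apply ih hrv
      exact List.prefix_of_prefix_length_le hu (List.prefix_append v [a]) hlen
    · have : u = v ++ [a] := hu.eq_of_length (by
        have := hu.length_le
        simp only [List.length_append, List.length_singleton] at this ⊢
        omega)
      subst this
      exact hr
  
lemma pf_reverse (w : List α) : PF w.reverse = List.reverse '' PF w := by
  ext p
  simp only [PF, Set.mem_setOf_eq, Set.mem_image]
  constructor
  · rintro ⟨hinf, hpal⟩
    refine ⟨p.reverse, ⟨?_, ?_⟩, List.reverse_reverse p⟩
    · rw [← List.reverse_infix, List.reverse_reverse]; exact hinf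
    · have hp' : p.reverse = p := hpal
      show p.reverse.reverse = p.reverse
      rw [List.reverse_reverse, hp']
  · rintro ⟨q, ⟨hinf, hpal⟩, rfl⟩
    refine ⟨List.reverse_infix.mpr hinf, ?_⟩
    have hq' : q.reverse = q := hpal
    show q.reverse.reverse = q.reverse
    rw [List.reverse_reverse, hq']

lemma rich_reverse {w : List α} (h : Rich w) : Rich w.reverse := by
  rw [rich_iff] at h ⊢
  rw [pf_reverse, Set.ncard_image_of_injective _ List.reverse_injective,
    List.length_reverse]
  exact h

/-- Every suffix of a rich word is rich. -/
lemma rich_suffix {w u : List α} (h : Rich w) (hu : u <:+ w) : Rich u := by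
  have h1 : Rich w.reverse := rich_reverse h
  have h2 : u.reverse <+: w.reverse := List.reverse_prefix.mpr hu
  have h3 : Rich u.reverse := rich_prefix w.reverse h1 u.reverse h2
  have := rich_reverse h3
  rwa [List.reverse_reverse] at this

end RichAux

theorem factor_of_rich_is_rich {α : Type*} (w u : List α)
    (hrich : Rich w) (hfac : u <:+: w) : Rich u := by
  obtain ⟨x, y, hxy⟩ := hfac
  have hpre : x ++ u <+: w := ⟨y, by rw [← hxy, List.append_assoc]⟩
  have h1 : Rich (x ++ u) := RichAux.rich_prefix w hrich _ hpre
  exact RichAux.rich_suffix h1 ⟨x, rfl⟩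
end

section
/- If b is a rich square-free word over an alphabet A and a is a letter not in A, then the word b·a·reverse(b) is rich and square-free. -/
namespace List

variable {α : Type*} {a : α}

theorem IsInfix.infix_or_infix_of_notMem {p b c : List α} (h : p <:+: b ++ a :: c)
    (hb : a ∉ b) (hc : a ∉ c) (hp : a ∉ p) : p <:+: b ∨ p <:+: c := by
  obtain ⟨s, t, hst⟩ := h
  have hmem : a ∈ s ++ p ++ t := by simp [hst]
  rcases (by simpa [hp] using hmem : a ∈ s ∨ a ∈ t) with hs | ht
  · obtain ⟨s₁, s₂, rfl⟩ := append_of_mem hs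
    obtain ⟨-, -, rfl⟩ := (append_cons_inj_of_notMem hb hc).mp (by simpa using hst.symm)
    exact Or.inr ⟨s₂, t, by simp⟩
  · obtain ⟨t₁, t₂, rfl⟩ := append_of_mem ht
    obtain ⟨rfl, -⟩ := (append_cons_inj_of_notMem hb hc).mp
      (by simpa using hst.symm : b ++ a :: c = (s ++ p ++ t₁) ++ a :: t₂)
    exact Or.inl ⟨s, t₁, rfl⟩

theorem ncard_setOf_isSuffix (l : List α) : {x | x <:+ l}.ncard = l.length + 1 := by
  rw [← Nat.card_Iic l.length, ← Set.ncard_coe_finset, Finset.coe_Iic]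
  refine Set.ncard_congr (fun x _ => x.length) (fun x hx => hx.length_le) ?_ ?_
  · exact fun x y hx hy hxy => (suffix_of_suffix_length_le hx hy hxy.le).eq_of_length hxy
  · intro n (hn : n ≤ l.length)
    exact ⟨l.drop (l.length - n), l.drop_suffix _, by rw [length_drop]; omega⟩

end List

theorem Palindromic.infix_of_infix_reverse {α : Type*} {p b : List α} (hp : Palindromic p)
    (h : p <:+: b.reverse) : p <:+: b := by
  unfold Palindromic at hp
  simpa [hp] using List.reverse_infix.mpr h

theorem SqFree.reverse {α : Type*} {w : List α} (hw : SqFree w) : SqFree w.reverse := by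
  intro u hu h
  refine hw u.reverse (by simpa using hu) ?_
  simpa using List.reverse_infix.mpr h

section AppendConsReverse

variable {α : Type*} {a : α} {b : List α}

theorem palindromic_infix_append_cons_reverse_iff (ha : a ∉ b) {p : List α} :
    (p <:+: b ++ a :: b.reverse ∧ Palindromic p ∧ a ∈ p) ↔
      ∃ x, x <:+ b ∧ x ++ a :: x.reverse = p := by
  have har : a ∉ b.reverse := by simpa using ha
  constructor
  · rintro ⟨⟨s, t, hst⟩, hpal, hap⟩
    obtain ⟨x, y, rfl⟩ := List.append_of_mem hap
    obtain ⟨hsx, -, hyt⟩ := (List.append_cons_inj_of_notMem ha har).mp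
      (by simpa using hst.symm : b ++ a :: b.reverse = (s ++ x) ++ a :: (y ++ t))
    have hx : a ∉ x := fun h => ha (by simp [hsx, h])
    have hy : a ∉ y := fun h => har (by simp [hyt, h])
    have : x ++ a :: y = y.reverse ++ a :: x.reverse := by simpa [Palindromic] using hpal.symm
    obtain ⟨rfl, -⟩ := (List.append_cons_inj_of_notMem hx hy).mp this
    exact ⟨y.reverse, ⟨s, by simpa using hsx.symm⟩, by simp⟩
  · rintro ⟨x, ⟨s, rfl⟩, rfl⟩
    exact ⟨⟨s, s.reverse, by simp⟩, by simp [Palindromic], by simp⟩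

theorem setOf_palindromic_infix_append_cons_reverse (ha : a ∉ b) :
    {p | p <:+: b ++ a :: b.reverse ∧ Palindromic p} =
      {p | p <:+: b ∧ Palindromic p} ∪ (fun x => x ++ a :: x.reverse) '' {x | x <:+ b} := by
  ext p
  by_cases hap : a ∈ p
  · have hnot : ¬ p <:+: b := fun h => ha (h.subset hap)
    simpa [hap, hnot] using palindromic_infix_append_cons_reverse_iff ha (p := p)
  · have hnot : p ∉ (fun x => x ++ a :: x.reverse) '' {x | x <:+ b} := by
      rintro ⟨x, -, rfl⟩
      simp at hap
    simp only [Set.mem_ofPred_eq, Set.mem_union, hnot, or_false]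
    constructor
    · rintro ⟨h, hpal⟩
      rcases h.infix_or_infix_of_notMem ha (by simpa using ha) hap with h | h
      exacts [⟨h, hpal⟩, ⟨hpal.infix_of_infix_reverse h, hpal⟩]
    · rintro ⟨h, hpal⟩
      exact ⟨h.trans (b.prefix_append _).isInfix, hpal⟩

theorem Rich.append_cons_reverse (hb : Rich b) (ha : a ∉ b) : Rich (b ++ a :: b.reverse) := by
  rw [Rich] at hb ⊢
  have hinj : Function.Injective fun x : List α => x ++ a :: x.reverse := fun x y h =>
    (List.append_inj h (by
      have := congrArg List.length h
      simp only [List.length_append, List.length_cons, List.length_reverse] at this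
      omega)).1
  have hdisj : Disjoint {p | p <:+: b ∧ Palindromic p}
      ((fun x => x ++ a :: x.reverse) '' {x | x <:+ b}) := by
    refine Set.disjoint_left.mpr ?_
    rintro _ ⟨h, -⟩ ⟨x, -, rfl⟩
    exact ha (h.subset (by simp))
  have hcentred : ((fun x => x ++ a :: x.reverse) '' {x | x <:+ b}).ncard = b.length + 1 := by
    rw [Set.ncard_image_of_injective _ hinj, List.ncard_setOf_isSuffix]
  rw [setOf_palindromic_infix_append_cons_reverse ha, Set.ncard_union_eq hdisj
    (Set.finite_of_ncard_ne_zero (by omega)) (Set.finite_of_ncard_ne_zero (by omega)),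
    hb, hcentred]
  simp only [List.length_append, List.length_cons, List.length_reverse]
  omega

theorem SqFree.append_cons_reverse (hb : SqFree b) (ha : a ∉ b) :
    SqFree (b ++ a :: b.reverse) := by
  classical
  have har : a ∉ b.reverse := by simpa using ha
  intro u hu h
  by_cases hau : a ∈ u
  · have hcount := h.count_le a
    simp only [List.count_append, List.count_cons_self, List.count_eq_zero.mpr ha,
      List.count_eq_zero.mpr har] at hcount
    have := List.count_pos_iff.mpr hau
    omega
  · rcases h.infix_or_infix_of_notMem ha har (by simpa using hau) with h | h
    exacts [hb u hu h, hb.reverse u hu h]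

end AppendConsReverse

theorem basic_recursion_rich_squarefree {α : Type*} (b : List α) (a : α)
    (hrich : Rich b) (hsf : SqFree b) (ha : a ∉ b) :
    Rich (b ++ [a] ++ b.reverse) ∧ SqFree (b ++ [a] ++ b.reverse) := by
  simpa using ⟨hrich.append_cons_reverse ha, hsf.append_cons_reverse ha⟩
end
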